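/- arXiv:2112.11780 — 7 statements merged into one kernel-verified Lean document; each statement's English description precedes it below -/
import Mathlib

section
/- The map f : ℝ → ℝ defined by f(x) = −x is lightly chaotic with respect to the subbase S = {(−∞, a) : a ∈ ℝ} ∪ {(b, +∞) : b ∈ ℝ} of the usual topology on ℝ: for all nonempty U, V ∈ S there is k ≥ 1 with f^k(U) ∩ V ≠ ∅, and every member of S contains a periodic point of f. -/
theorem stmt1 (f : ℝ → ℝ) (hf : ∀ x, f x = -x)
    (S : Set (Set ℝ))
    (hS : S = {s | ∃ a : ℝ, s = Set.Iio a} ∪ {s | ∃ b : ℝ, s = Set.Ioi b}) :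
    (∀ U ∈ S, ∀ V ∈ S, U.Nonempty → V.Nonempty →
      ∃ k ≥ 1, (f^[k] '' U ∩ V).Nonempty) ∧
    (∀ U ∈ S, ∃ x ∈ U, ∃ k ≥ 1, f^[k] x = x) := by
  have h1 : ∀ x, f^[1] x = -x := by intro x; simp [hf]
  have h2 : ∀ x, f^[2] x = x := by
    intro x
    show f (f x) = x
    simp [hf]
  subst hS
  constructor
  · rintro U hU V hV _ _
    rcases hU with ⟨a, rfl⟩ | ⟨b, rfl⟩ <;> rcases hV with ⟨a', rfl⟩ | ⟨b', rfl⟩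
    · refine ⟨2, by norm_num, min a a' - 1, ⟨min a a' - 1, ?_, h2 _⟩, ?_⟩
      · simp only [Set.mem_Iio]; linarith [min_le_left a a']
      · simp only [Set.mem_Iio]; linarith [min_le_right a a']
    · -- U = Iio a, V = Ioi b'. Use k = 1, point y = min a (-b') - 1
      refine ⟨1, le_refl 1, -(min a (-b') - 1), ⟨min a (-b') - 1, ?_, h1 _⟩, ?_⟩
      · simp only [Set.mem_Iio]; linarith [min_le_left a (-b')]
      · simp only [Set.mem_Ioi]; linarith [min_le_right a (-b')]
    · -- U = Ioi b, V = Iio a'. k = 1, y = max b (-a') + 1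
      refine ⟨1, le_refl 1, -(max b (-a') + 1), ⟨max b (-a') + 1, ?_, h1 _⟩, ?_⟩
      · simp only [Set.mem_Ioi]; linarith [le_max_left b (-a')]
      · simp only [Set.mem_Iio]; linarith [le_max_right b (-a')]
    · refine ⟨2, by norm_num, max b b' + 1, ⟨max b b' + 1, ?_, h2 _⟩, ?_⟩
      · simp only [Set.mem_Ioi]; linarith [le_max_left b b']
      · simp only [Set.mem_Ioi]; linarith [le_max_right b b']
  · rintro U (⟨a, rfl⟩ | ⟨b, rfl⟩)
    · exact ⟨a - 1, by simp, 2, by norm_num, h2 _⟩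
    · exact ⟨b + 1, by simp, 2, by norm_num, h2 _⟩
end

section
/- Let (X,d) be a metric space and f : X → X continuous. If f is topologically transitive and periodically dense (i.e., chaotic in the sense of Devaney without the sensitivity condition), then the induced map F_f on C(X,X) with the compact-open topology is lightly chaotic with respect to the canonical subbase S_k = {[K,G] : K compact, G open}: for all nonempty A, B ∈ S_k there is k ≥ 1 with F_f^k(A) ∩ B ≠ ∅, and every nonempty member of S_k contains a periodic point of F_f. -/
lemma iter_comp_apply {X : Type*} [MetricSpace X] (f g : C(X, X)) (k : ℕ) (x : X) :
    ((fun g : C(X, X) => f.comp g)^[k] g) x = (⇑f)^[k] (g x) := by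
  induction k with
  | zero => simp
  | succ n ih =>
    rw [Function.iterate_succ_apply', Function.iterate_succ_apply']
    simp [ih]

theorem stmt8 {X : Type*} [MetricSpace X] (f : C(X, X))
    (htrans : ∀ U V : Set X, IsOpen U → IsOpen V → U.Nonempty → V.Nonempty →
      ∃ k ≥ 1, ((⇑f)^[k] '' U ∩ V).Nonempty)
    (hper : Dense {x : X | ∃ k ≥ 1, (⇑f)^[k] x = x}) :
    (∀ (K₁ G₁ K₂ G₂ : Set X), IsCompact K₁ → IsOpen G₁ → IsCompact K₂ → IsOpen G₂ →
      {g : C(X, X) | Set.MapsTo g K₁ G₁}.Nonempty →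
      {g : C(X, X) | Set.MapsTo g K₂ G₂}.Nonempty →
      ∃ k ≥ 1, ((fun g : C(X, X) => f.comp g)^[k] '' {g : C(X, X) | Set.MapsTo g K₁ G₁}
        ∩ {g : C(X, X) | Set.MapsTo g K₂ G₂}).Nonempty) ∧
    (∀ K G : Set X, IsCompact K → IsOpen G → {g : C(X, X) | Set.MapsTo g K G}.Nonempty →
      ∃ g : C(X, X), Set.MapsTo g K G ∧ ∃ k ≥ 1, (fun g : C(X, X) => f.comp g)^[k] g = g) := by
  constructor
  · intro K₁ G₁ K₂ G₂ hK₁ hG₁ hK₂ hG₂ ⟨g₁, hg₁⟩ ⟨g₂, hg₂⟩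
    rcases K₂.eq_empty_or_nonempty with rfl | hK₂ne
    · exact ⟨1, le_refl 1, ⟨(fun g : C(X, X) => f.comp g)^[1] g₁,
        ⟨⟨g₁, hg₁, rfl⟩, fun x hx => absurd hx (Set.notMem_empty x)⟩⟩⟩
    · have hG₂ne : G₂.Nonempty := by
        obtain ⟨x, hx⟩ := hK₂ne
        exact ⟨g₂ x, hg₂ hx⟩
      rcases K₁.eq_empty_or_nonempty with rfl | hK₁ne
      · -- use U = univ
        obtain ⟨k, hk, y, ⟨x, _, rfl⟩, hyV⟩ :=
          htrans Set.univ G₂ isOpen_univ hG₂ ⟨g₂ hK₂ne.some, trivial⟩ hG₂ne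
        refine ⟨k, hk, (fun g : C(X, X) => f.comp g)^[k] (ContinuousMap.const X x),
          ⟨ContinuousMap.const X x, fun z hz => absurd hz (Set.notMem_empty z), rfl⟩,
          fun z _ => ?_⟩
        simpa [iter_comp_apply] using hyV
      · have hG₁ne : G₁.Nonempty := ⟨g₁ hK₁ne.some, hg₁ hK₁ne.some_mem⟩
        obtain ⟨k, hk, y, ⟨x, hxU, rfl⟩, hyV⟩ := htrans G₁ G₂ hG₁ hG₂ hG₁ne hG₂ne
        refine ⟨k, hk, (fun g : C(X, X) => f.comp g)^[k] (ContinuousMap.const X x),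
          ⟨ContinuousMap.const X x, fun z _ => hxU, rfl⟩,
          fun z _ => ?_⟩
        simpa [iter_comp_apply] using hyV
  · intro K G hK hG ⟨g, hg⟩
    rcases K.eq_empty_or_nonempty with rfl | hKne
    · by_cases hX : Nonempty X
      · obtain ⟨x, ⟨k, hk, hx⟩, -⟩ := hper.exists_mem_open isOpen_univ Set.univ_nonempty
        refine ⟨ContinuousMap.const X x, fun z hz => absurd hz (Set.notMem_empty z),
          k, hk, ContinuousMap.ext fun z => ?_⟩
        simpa [iter_comp_apply] using hx
      · exact ⟨g, fun z hz => absurd hz (Set.notMem_empty z), 1, le_refl 1,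
          ContinuousMap.ext fun z => absurd ⟨z⟩ hX⟩
    · have hGne : G.Nonempty := ⟨g hKne.some, hg hKne.some_mem⟩
      obtain ⟨x, ⟨k, hk, hx⟩, hxG⟩ := hper.exists_mem_open hG hGne
      refine ⟨ContinuousMap.const X x, fun z _ => hxG, k, hk, ContinuousMap.ext fun z => ?_⟩
      simpa [iter_comp_apply] using hx
end

section
/- Let (X,d) be a metric space and f : X → X continuous. If the induced map F_f on C(X,X) is lightly chaotic with respect to the canonical subbase S_p = {[{x}, G] : x ∈ X, G open} of the point-open topology, then f is topologically transitive and periodically dense. -/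
lemma iter_comp {X : Type*} [MetricSpace X] (f : C(X, X)) :
    ∀ (k : ℕ) (g : C(X, X)) (x : X),
      ((fun g : C(X, X) => f.comp g)^[k] g) x = (⇑f)^[k] (g x) := by
  intro k
  induction k with
  | zero => intro g x; simp
  | succ n ih =>
    intro g x
    rw [Function.iterate_succ_apply', Function.iterate_succ_apply']
    simp [ih g x]

theorem stmt9 {X : Type*} [MetricSpace X] (f : C(X, X))
    (h1 : ∀ (x₁ : X) (G₁ : Set X) (x₂ : X) (G₂ : Set X), IsOpen G₁ → IsOpen G₂ →
      {g : C(X, X) | g x₁ ∈ G₁}.Nonempty → {g : C(X, X) | g x₂ ∈ G₂}.Nonempty →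
      ∃ k ≥ 1, ((fun g : C(X, X) => f.comp g)^[k] '' {g : C(X, X) | g x₁ ∈ G₁}
        ∩ {g : C(X, X) | g x₂ ∈ G₂}).Nonempty)
    (h2 : ∀ (x : X) (G : Set X), IsOpen G → {g : C(X, X) | g x ∈ G}.Nonempty →
      ∃ g : C(X, X), g x ∈ G ∧ ∃ k ≥ 1, (fun g : C(X, X) => f.comp g)^[k] g = g) :
    (∀ U V : Set X, IsOpen U → IsOpen V → U.Nonempty → V.Nonempty →
      ∃ k ≥ 1, ((⇑f)^[k] '' U ∩ V).Nonempty) ∧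
    Dense {x : X | ∃ k ≥ 1, (⇑f)^[k] x = x} := by
  constructor
  · intro U V hU hV ⟨u, hu⟩ ⟨v, hv⟩
    obtain ⟨k, hk, w, ⟨g, hg, hgw⟩, hwV⟩ :=
      h1 u U u V hU hV ⟨ContinuousMap.const X u, hu⟩ ⟨ContinuousMap.const X v, hv⟩
    have heq := iter_comp f k g u
    rw [hgw] at heq
    exact ⟨k, hk, w u, ⟨g u, hg, heq.symm⟩, hwV⟩
  · rw [dense_iff_inter_open]
    intro G hG ⟨x0, hx0⟩
    obtain ⟨g, hg, k, hk, hgk⟩ := h2 x0 G hG ⟨ContinuousMap.const X x0, hx0⟩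
    refine ⟨g x0, hg, k, hk, ?_⟩
    have := iter_comp f k g x0
    rw [hgk] at this
    exact this.symm
end

section
/- Let X be a metric continuum (compact connected metric space) and f : X → X continuous. If g ∈ C(X,X) is a periodic point of F_f (i.e., f^k ∘ g = g for some k ≥ 1) and the set of periodic points of f has cardinality strictly less than the continuum, then g is a constant map. -/
theorem stmt11 {X : Type*} [MetricSpace X] [CompactSpace X] [ConnectedSpace X]
    (f : X → X) (hf : Continuous f) (g : C(X, X)) (k : ℕ) (hk : 1 ≤ k)
    (hg : f^[k] ∘ ⇑g = ⇑g)
    (hcard : Cardinal.mk {x : X | ∃ m ≥ 1, f^[m] x = x} < Cardinal.continuum) :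
    ∃ c : X, ∀ x : X, g x = c := by
  by_contra hcon
  push_neg at hcon
  obtain ⟨x0⟩ : Nonempty X := inferInstance
  obtain ⟨b, hb⟩ := hcon (g x0)
  set S := {x : X | ∃ m ≥ 1, f^[m] x = x} with hS
  have hmem : ∀ x : X, g x ∈ S := by
    intro x
    exact ⟨k, hk, congrFun hg x⟩
  set d := dist (g x0) (g b) with hd
  have hdpos : 0 < d := dist_pos.mpr (fun h => hb h.symm)
  have hcont : Continuous fun x => dist (g x0) (g x) :=
    (continuous_const.dist g.continuous)
  have hIVT : Set.Icc (0 : ℝ) d ⊆ Set.range fun x => dist (g x0) (g x) := by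
    have := intermediate_value_univ x0 b hcont
    simpa using this
  -- injection from Icc 0 d into S
  have hinj : Cardinal.continuum ≤ Cardinal.mk S := by
    have : ∀ t : Set.Icc (0 : ℝ) d, ∃ x : X, dist (g x0) (g x) = t := by
      intro t
      obtain ⟨x, hx⟩ := hIVT t.2
      exact ⟨x, hx⟩
    choose ch hch using this
    have hmkIcc : Cardinal.mk (Set.Icc (0 : ℝ) d) = Cardinal.continuum :=
      Cardinal.mk_Icc_real hdpos
    have hinj' : Function.Injective (fun t => (⟨g (ch t), hmem (ch t)⟩ : S)) := by
      intro t s hts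
      have h1 : g (ch t) = g (ch s) := congrArg Subtype.val hts
      have h2 := hch t ▸ hch s ▸ congrArg (dist (g x0)) h1
      exact Subtype.ext h2
    have h := Cardinal.lift_mk_le'.mpr ⟨⟨_, hinj'⟩⟩
    rw [hmkIcc] at h
    simpa [Cardinal.lift_continuum, Cardinal.lift_id] using h
  exact absurd hcard (not_lt.mpr hinj)
end

section
/- Let X be a metric continuum with at least two points and f : X → X continuous with fewer than continuum many periodic points. Then F_f on C(X,X) with the compact-open topology is not periodically dense: there is a nonempty open subset of C(X,X) containing no periodic point of F_f. Specifically, for a ≠ b in X and disjoint open U ∋ a, V ∋ b, the open set [{a},U] ∩ [{b},V] contains the identity but no periodic point of F_f. -/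
lemma key12 {X : Type*} [MetricSpace X] [ConnectedSpace X]
    (S : Set X) (hS : Cardinal.mk S < Cardinal.continuum)
    (g : C(X, X)) (hrange : ∀ x, g x ∈ S) {a b : X} (hab : g a ≠ g b) : False := by
  set D := dist (g a) (g b) with hDdef
  have hD : 0 < D := dist_pos.2 hab
  have hcont : Continuous fun x => dist (g a) (g x) :=
    continuous_const.dist (map_continuous g)
  have hpre : IsPreconnected (Set.range fun x => dist (g a) (g x)) :=
    isPreconnected_range hcont
  have hord := hpre.ordConnected
  have h0 : (0 : ℝ) ∈ Set.range fun x => dist (g a) (g x) := ⟨a, by simp⟩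
  have hDr : D ∈ Set.range fun x => dist (g a) (g x) := ⟨b, rfl⟩
  have hIcc : Set.Icc (0 : ℝ) D ⊆ Set.range fun x => dist (g a) (g x) :=
    hord.out h0 hDr
  have hinj : ∃ h : Set.Icc (0 : ℝ) D → S, Function.Injective h := by
    have hchoice : ∀ t : Set.Icc (0 : ℝ) D, ∃ x : X, dist (g a) (g x) = t.1 := by
      intro t
      obtain ⟨x, hx⟩ := hIcc t.2
      exact ⟨x, hx⟩
    choose ψ hψ using hchoice
    refine ⟨fun t => ⟨g (ψ t), hrange _⟩, ?_⟩
    intro t t' h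
    have : dist (g a) (g (ψ t)) = dist (g a) (g (ψ t')) := by
      simp only [Subtype.mk.injEq] at h; rw [h]
    apply Subtype.ext
    rw [← hψ t, ← hψ t', this]
  obtain ⟨h, hinj⟩ := hinj
  have hle : Cardinal.lift.{_} (Cardinal.mk (Set.Icc (0 : ℝ) D)) ≤
      Cardinal.lift.{0} (Cardinal.mk S) := Cardinal.lift_mk_le'.2 ⟨⟨h, hinj⟩⟩
  rw [Cardinal.mk_Icc_real hD, Cardinal.lift_continuum, Cardinal.lift_id'] at hle
  exact absurd (hle.trans_lt hS) (lt_irrefl _)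

theorem stmt12 {X : Type*} [MetricSpace X] [CompactSpace X] [ConnectedSpace X]
    [Nontrivial X] (f : X → X) (hf : Continuous f)
    (hcard : Cardinal.mk {x : X | ∃ m ≥ 1, f^[m] x = x} < Cardinal.continuum) :
    (∃ W : Set C(X, X), IsOpen W ∧ W.Nonempty ∧
      ∀ g ∈ W, ¬ ∃ k ≥ 1, f^[k] ∘ ⇑g = ⇑g) ∧
    (∀ a b : X, a ≠ b → ∀ U V : Set X, IsOpen U → IsOpen V → a ∈ U → b ∈ V →
      Disjoint U V →
      ContinuousMap.id X ∈ {g : C(X, X) | g a ∈ U ∧ g b ∈ V} ∧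
      ∀ g ∈ {g : C(X, X) | g a ∈ U ∧ g b ∈ V}, ¬ ∃ k ≥ 1, f^[k] ∘ ⇑g = ⇑g) := by
  have main : ∀ a b : X, ∀ U V : Set X, a ∈ U → b ∈ V → Disjoint U V →
      ∀ g ∈ {g : C(X, X) | g a ∈ U ∧ g b ∈ V}, ¬ ∃ k ≥ 1, f^[k] ∘ ⇑g = ⇑g := by
    intro a b U V haU hbV hUV g hg ⟨k, hk1, hk⟩
    have hab : g a ≠ g b := by
      intro h
      exact (hUV.ne_of_mem hg.1 hg.2) (by rw [h])
    refine key12 {x : X | ∃ m ≥ 1, f^[m] x = x} hcard g (fun x => ⟨k, hk1, ?_⟩) hab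
    exact congrFun hk x
  constructor
  · obtain ⟨a, b, hab⟩ := exists_pair_ne X
    obtain ⟨U, V, hU, hV, haU, hbV, hUV⟩ := t2_separation hab
    refine ⟨{g : C(X, X) | g a ∈ U ∧ g b ∈ V}, ?_, ⟨ContinuousMap.id X, haU, hbV⟩, ?_⟩
    · exact ((hU.preimage (continuous_eval_const a)).inter
        (hV.preimage (continuous_eval_const b)))
    · exact main a b U V haU hbV hUV
  · intro a b hab U V hU hV haU hbV hUV
    exact ⟨⟨haU, hbV⟩, main a b U V haU hbV hUV⟩
end

section
/- Let f : [0,1] → [0,1] be continuous and periodically dense. Then F_f on C([0,1],[0,1]) with the compact-open topology has no dense orbit: for every g ∈ C([0,1],[0,1]) the orbit {f^n ∘ g : n ∈ ℕ} is not dense. -/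
/-! If the orbit of `g` were dense, some `f^[n] ∘ g` would be `1/4`-close to the identity, hence
map onto `[1/4, 3/4]`. A dense orbit in `C(I, I)` meets every (infinite) ball around a constant
infinitely often, so some `f^[m] ∘ g` with `m ≥ n` is `1/8`-close to the constant `1/2`. Then
`f^[m - n]` maps `[1/4, 3/4]` into `(3/8, 5/8)`, so no point of `(1/4, 3/8)` is periodic,
contradicting the density of periodic points. -/

open Function Set Topology unitInterval

theorem DenseRange.exists_ge_mem_of_infinite {X : Type*} [TopologicalSpace X] [T1Space X]
    {u : ℕ → X} (hu : DenseRange u) {U : Set X} (hU : IsOpen U) (hinf : U.Infinite) (N : ℕ) :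
    ∃ m ≥ N, u m ∈ U := by
  have hfin : (u '' Iio N).Finite := (finite_Iio N).image u
  obtain ⟨m, hmU, hmN⟩ :=
    hu.exists_mem_open (hU.sdiff hfin.isClosed) (hinf.sdiff hfin).nonempty
  exact ⟨m, not_lt.1 fun hm => hmN ⟨m, hm, rfl⟩, hmU⟩

theorem ContinuousMap.infinite_ball_const {X Y : Type*} [TopologicalSpace X] [CompactSpace X]
    [Nonempty X] [MetricSpace Y] (c : Y) [(𝓝[≠] c).NeBot] {r : ℝ} (hr : 0 < r) :
    (Metric.ball (const X c) r).Infinite := by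
  have hinj : Injective (const X : Y → C(X, Y)) := fun a b h =>
    congrArg (fun k : C(X, Y) => k (Classical.arbitrary X)) h
  refine ((infinite_of_mem_nhds c (Metric.ball_mem_nhds c hr)).image hinj.injOn).mono ?_
  rintro _ ⟨y, hy, rfl⟩
  exact dist_lt_of_nonempty fun _ => hy

theorem ContinuousMap.coe_iterate_comp_left {X Y : Type*} [TopologicalSpace X]
    [TopologicalSpace Y] (f : C(Y, Y)) (g : C(X, Y)) (n : ℕ) :
    ⇑((fun h : C(X, Y) => f.comp h)^[n] g) = (⇑f)^[n] ∘ g := by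
  induction n with
  | zero => rfl
  | succ n ih => rw [iterate_succ_apply', coe_comp, ih, iterate_succ']; rfl

theorem Set.MapsTo.mem_of_isPeriodicPt {α : Type*} {g : α → α} {S T : Set α}
    (hg : MapsTo g S T) (hTS : T ⊆ S) {x : α} (hx : x ∈ S) {k : ℕ} (hk : 0 < k)
    (hper : IsPeriodicPt g k x) :
    x ∈ T := by
  obtain ⟨k, rfl⟩ := Nat.exists_eq_add_of_lt hk
  rw [← hper.eq, zero_add, iterate_succ_apply']
  exact hg ((hg.mono_right hTS).iterate k hx)

theorem unitInterval.preimage_Icc_subset_range_of_dist_id_lt {g : C(I, I)} {δ : ℝ}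
    (hg : dist g (ContinuousMap.id I) < δ) :
    Subtype.val ⁻¹' Icc δ (1 - δ) ⊆ range g := by
  rintro y ⟨hy₀, hy₁⟩
  have h₀ : dist (g 0) 0 < δ := (g.dist_apply_le_dist (g := ContinuousMap.id I) 0).trans_lt hg
  have h₁ : dist (g 1) 1 < δ := (g.dist_apply_le_dist (g := ContinuousMap.id I) 1).trans_lt hg
  rw [Subtype.dist_eq, Real.dist_eq, abs_lt] at h₀ h₁
  refine intermediate_value_univ 0 1 g.continuous ⟨?_, ?_⟩
  · show (g 0 : ℝ) ≤ y
    simp only [Icc.coe_zero] at h₀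
    linarith
  · show (y : ℝ) ≤ g 1
    simp only [Icc.coe_one] at h₁
    linarith

theorem stmt13 (f : C(unitInterval, unitInterval))
    (hper : Dense {x : unitInterval | ∃ k ≥ 1, (⇑f)^[k] x = x}) :
    ∀ g : C(unitInterval, unitInterval),
      ¬ Dense (Set.range fun n : ℕ =>
        (fun h : C(unitInterval, unitInterval) => f.comp h)^[n] g) := by
  intro g hdense
  obtain ⟨_, ⟨n, rfl⟩, hn⟩ :=
    hdense.exists_dist_lt (ContinuousMap.id I) (by norm_num : (0 : ℝ) < 1 / 4)
  have hrange := preimage_Icc_subset_range_of_dist_id_lt (dist_comm (ContinuousMap.id I) _ ▸ hn)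
  obtain ⟨m, hnm, hm⟩ := DenseRange.exists_ge_mem_of_infinite hdense Metric.isOpen_ball
    (ContinuousMap.infinite_ball_const (⟨1 / 2, by norm_num, by norm_num⟩ : I)
      (by norm_num : (0 : ℝ) < 1 / 8)) n
  have hmaps : MapsTo (⇑f)^[m - n] (Subtype.val ⁻¹' Icc (1 / 4) (1 - 1 / 4))
      (Subtype.val ⁻¹' Ioo (3 / 8) (5 / 8)) := by
    intro y hy
    obtain ⟨x, rfl⟩ := hrange hy
    have hx := (ContinuousMap.dist_apply_le_dist x).trans_lt hm
    rw [ContinuousMap.coe_iterate_comp_left] at hx ⊢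
    rw [comp_apply, ← iterate_add_apply, Nat.sub_add_cancel hnm]
    rw [Subtype.dist_eq, Real.dist_eq, abs_lt] at hx
    simp only [comp_apply, ContinuousMap.const_apply] at hx
    constructor <;> linarith [hx.1, hx.2]
  obtain ⟨p, ⟨k, hk, hp⟩, hp₀, hp₁⟩ :=
    hper.exists_mem_open
      (isOpen_Ioo (a := (1 / 4 : ℝ)) (b := 3 / 8).preimage continuous_subtype_val)
      ⟨⟨5 / 16, by norm_num, by norm_num⟩, by norm_num, by norm_num⟩
  have hpT := hmaps.mem_of_isPeriodicPt
    (fun y hy => ⟨by linarith [hy.1], by linarith [hy.2]⟩) ⟨hp₀.le, by linarith⟩ hk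
    (IsPeriodicPt.iterate hp (m - n))
  linarith [hpT.1]
end

section
/- Let X be a compact metric space and f : X → X continuous and onto-stable, i.e., there exists ε > 0 such that every g ∈ C(X,X) with sup-distance d̂(f,g) < ε is surjective. If the set P(f) of periodic points of f is not all of X, then F_f is not periodically dense on C(X,X) with the uniform metric: the ball B_ε(f) contains no periodic point of F_f. -/
theorem stmt14 {X : Type*} [MetricSpace X] [CompactSpace X] (f : C(X, X))
    (ε : ℝ) (hε : 0 < ε)
    (hstable : ∀ g : C(X, X), dist f g < ε → Function.Surjective g)
    (hP : {x : X | ∃ k ≥ 1, (⇑f)^[k] x = x} ≠ Set.univ) :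
    ∀ g : C(X, X), dist f g < ε → ¬ ∃ k ≥ 1, (⇑f)^[k] ∘ ⇑g = ⇑g := by
  rintro g hg ⟨k, hk, hfk⟩
  apply hP
  ext x
  simp only [Set.mem_setOf_eq, Set.mem_univ, iff_true]
  obtain ⟨y, rfl⟩ := hstable g hg x
  exact ⟨k, hk, congrFun hfk y⟩
end
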